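/- arXiv:2603.14134 — 7 statements merged into one kernel-verified Lean document; each statement's English description precedes it below -/
import Mathlib

section
/- Let ψ : ℝ≥0 → ℝ≥0 be a bounded measurable function with ‖ψ‖_∞ = 1, and for p > 0 define I_p(ψ) = (p ∫_0^∞ ψ(r) r^{p-1} dr)^{1/p}. Then for 0 < p < q with I_p(ψ) and I_q(ψ) finite, one has I_p(ψ) ≤ I_q(ψ). -/
open MeasureTheory Set

/-!
Bathtub argument. Choose `R` with `R ^ q / q = ∫ ψ r ^ (q - 1)`. The weight
`g r = r ^ (p - 1) - R ^ (p - q) * r ^ (q - 1) = r ^ (q - 1) * (r ^ (p - q) - R ^ (p - q))` is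
nonnegative exactly on `(0, R]`, so `0 ≤ ψ ≤ 1` gives `ψ * g ≤ 1_{(0,R]} * g` pointwise. Integrating,
`∫ ψ r ^ (p - 1) - R ^ p / q ≤ R ^ p / p - R ^ p / q`, i.e. `p ∫ ψ r ^ (p - 1) ≤ R ^ p = I_q(ψ) ^ p`.
If `∫ ψ r ^ (q - 1) = 0`, the same bound for every `R > 0` forces `∫ ψ r ^ (p - 1) = 0`.
-/

lemma setIntegral_Ioi_mul_rpow_nonneg {ψ : ℝ → ℝ} (hψ : ∀ᵐ r ∂volume.restrict (Ioi 0), 0 ≤ ψ r)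
    (s : ℝ) : 0 ≤ ∫ r in Ioi 0, ψ r * r ^ s :=
  setIntegral_nonneg_of_ae_restrict <| by
    filter_upwards [hψ, ae_restrict_mem measurableSet_Ioi] with r hψr hr
    exact mul_nonneg hψr (Real.rpow_nonneg (le_of_lt hr) s)

lemma integrableOn_Ioc_rpow_sub_one {p : ℝ} (hp : 0 < p) {R : ℝ} (hR : 0 ≤ R) :
    IntegrableOn (fun r : ℝ => r ^ (p - 1)) (Ioc 0 R) :=
  (intervalIntegrable_iff_integrableOn_Ioc_of_le hR).mp
    (intervalIntegral.intervalIntegrable_rpow' (by linarith))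

lemma integral_Ioc_rpow_sub_one {p : ℝ} (hp : 0 < p) {R : ℝ} (hR : 0 ≤ R) :
    ∫ r in Ioc 0 R, r ^ (p - 1) = R ^ p / p := by
  rw [← intervalIntegral.integral_of_le hR, integral_rpow (Or.inl (by linarith)),
    sub_add_cancel, Real.zero_rpow hp.ne', sub_zero]

lemma mul_rpow_sub_le_indicator {p q R r t : ℝ} (hpq : p ≤ q) (hR : 0 < R) (hr : 0 < r)
    (ht₀ : 0 ≤ t) (ht₁ : t ≤ 1) :
    t * (r ^ (p - 1) - R ^ (p - q) * r ^ (q - 1)) ≤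
      (Ioc 0 R).indicator (fun r => r ^ (p - 1) - R ^ (p - q) * r ^ (q - 1)) r := by
  have hfactor : r ^ (p - 1) - R ^ (p - q) * r ^ (q - 1)
      = (r ^ (p - q) - R ^ (p - q)) * r ^ (q - 1) := by
    rw [sub_mul, ← Real.rpow_add hr, sub_add_sub_cancel]
  have hrq : 0 ≤ r ^ (q - 1) := Real.rpow_nonneg hr.le _
  rcases le_or_gt r R with hrR | hRr
  · rw [indicator_of_mem (show r ∈ Ioc 0 R from ⟨hr, hrR⟩), hfactor]
    have : R ^ (p - q) ≤ r ^ (p - q) := Real.rpow_le_rpow_of_nonpos hr hrR (by linarith)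
    exact mul_le_of_le_one_left (mul_nonneg (by linarith) hrq) ht₁
  · rw [indicator_of_notMem fun h => (not_le.mpr hRr) h.2, hfactor]
    have : r ^ (p - q) ≤ R ^ (p - q) := Real.rpow_le_rpow_of_nonpos hR hRr.le (by linarith)
    exact mul_nonpos_of_nonneg_of_nonpos ht₀ (mul_nonpos_of_nonpos_of_nonneg (by linarith) hrq)

theorem integral_mul_rpow_sub_le {ψ : ℝ → ℝ} {p q R : ℝ} (hp : 0 < p) (hpq : p ≤ q) (hR : 0 < R)
    (hψ : ∀ᵐ r ∂volume.restrict (Ioi 0), 0 ≤ ψ r ∧ ψ r ≤ 1)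
    (hIp : IntegrableOn (fun r => ψ r * r ^ (p - 1)) (Ioi 0))
    (hIq : IntegrableOn (fun r => ψ r * r ^ (q - 1)) (Ioi 0)) :
    (∫ r in Ioi 0, ψ r * r ^ (p - 1)) - R ^ (p - q) * ∫ r in Ioi 0, ψ r * r ^ (q - 1)
      ≤ R ^ p / p - R ^ (p - q) * (R ^ q / q) := by
  have hq : 0 < q := hp.trans_le hpq
  set g : ℝ → ℝ := fun r => r ^ (p - 1) - R ^ (p - q) * r ^ (q - 1)
  have hIg : IntegrableOn g (Ioc 0 R) :=
    (integrableOn_Ioc_rpow_sub_one hp hR.le).sub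
      ((integrableOn_Ioc_rpow_sub_one hq hR.le).const_mul _)
  calc _ = ∫ r in Ioi 0, ψ r * g r := by
        rw [← integral_const_mul, ← integral_sub hIp (hIq.const_mul _)]
        congr 1 with r
        ring
    _ ≤ ∫ r in Ioi 0, (Ioc 0 R).indicator g r := by
        refine integral_mono_ae ?_ ?_ ?_
        · refine (hIp.sub (hIq.const_mul (R ^ (p - q)))).congr (ae_of_all _ fun r => ?_)
          simp only [g, Pi.sub_apply]
          ring
        · exact (integrable_indicator_iff measurableSet_Ioc).mpr
            (hIg.mono_measure Measure.restrict_le_self)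
        · filter_upwards [hψ, ae_restrict_mem measurableSet_Ioi] with r ⟨h₀, h₁⟩ hr
          exact mul_rpow_sub_le_indicator hpq hR hr h₀ h₁
    _ = ∫ r in Ioc 0 R, g r := by
        rw [setIntegral_indicator measurableSet_Ioc, inter_eq_right.mpr Ioc_subset_Ioi_self]
    _ = R ^ p / p - R ^ (p - q) * (R ^ q / q) := by
        rw [integral_sub (integrableOn_Ioc_rpow_sub_one hp hR.le)
            ((integrableOn_Ioc_rpow_sub_one hq hR.le).const_mul _), integral_const_mul,
          integral_Ioc_rpow_sub_one hp hR.le, integral_Ioc_rpow_sub_one hq hR.le]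

theorem mul_integral_mul_rpow_le {ψ : ℝ → ℝ} {p q : ℝ} (hp : 0 < p) (hpq : p ≤ q)
    (hψ : ∀ᵐ r ∂volume.restrict (Ioi 0), 0 ≤ ψ r ∧ ψ r ≤ 1)
    (hIp : IntegrableOn (fun r => ψ r * r ^ (p - 1)) (Ioi 0))
    (hIq : IntegrableOn (fun r => ψ r * r ^ (q - 1)) (Ioi 0)) :
    p * ∫ r in Ioi 0, ψ r * r ^ (p - 1)
      ≤ ((q * ∫ r in Ioi 0, ψ r * r ^ (q - 1)) ^ (1 / q)) ^ p := by
  have hq : 0 < q := hp.trans_le hpq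
  have key := fun R (hR : 0 < R) => integral_mul_rpow_sub_le hp hpq hR hψ hIp hIq
  have hB := setIntegral_Ioi_mul_rpow_nonneg (hψ.mono fun _ h => h.1) (q - 1)
  set A := ∫ r in Ioi 0, ψ r * r ^ (p - 1)
  set B := ∫ r in Ioi 0, ψ r * r ^ (q - 1)
  rcases hB.eq_or_lt with hB0 | hBpos
  · rw [← hB0, mul_zero, Real.zero_rpow (by positivity), Real.zero_rpow hp.ne']
    suffices A ≤ 0 by nlinarith
    refine le_of_forall_pos_le_add fun ε hε => ?_
    obtain ⟨R, hR, hRp⟩ : ∃ R > 0, R ^ p = p * ε :=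
      ⟨(p * ε) ^ p⁻¹, by positivity, Real.rpow_inv_rpow (by positivity) hp.ne'⟩
    have hRε := key R hR
    rw [← hB0, hRp, mul_zero, sub_zero, mul_div_cancel_left₀ ε hp.ne'] at hRε
    have : 0 ≤ R ^ (p - q) * (R ^ q / q) := by positivity
    linarith
  · have hRq : ((q * B) ^ (1 / q)) ^ q = q * B := by
      rw [one_div, Real.rpow_inv_rpow (by positivity) hq.ne']
    have hRB := key _ (by positivity : 0 < (q * B) ^ (1 / q))
    rw [hRq, mul_div_cancel_left₀ B hq.ne'] at hRB
    rw [← le_div_iff₀' hp]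
    linarith

theorem Ip_mono_general (ψ : ℝ → ℝ) (hnonneg : ∀ r, 0 ≤ ψ r)
    (hbdd : ∀ᵐ r ∂(volume.restrict (Ici (0:ℝ))), ψ r ≤ 1)
    (p q : ℝ) (hp : 0 < p) (hpq : p < q)
    (hIp : IntegrableOn (fun r => ψ r * r ^ (p - 1)) (Ioi 0))
    (hIq : IntegrableOn (fun r => ψ r * r ^ (q - 1)) (Ioi 0)) :
    (p * ∫ r in Ioi (0:ℝ), ψ r * r ^ (p - 1)) ^ (1 / p)
      ≤ (q * ∫ r in Ioi (0:ℝ), ψ r * r ^ (q - 1)) ^ (1 / q) := by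
  have hψ : ∀ᵐ r ∂volume.restrict (Ioi 0), 0 ≤ ψ r ∧ ψ r ≤ 1 := by
    rw [restrict_Ioi_eq_restrict_Ici]
    filter_upwards [hbdd] with r hr using ⟨hnonneg r, hr⟩
  have hψ₀ : ∀ᵐ r ∂volume.restrict (Ioi 0), 0 ≤ ψ r := ae_of_all _ hnonneg
  have hA := mul_nonneg hp.le (setIntegral_Ioi_mul_rpow_nonneg hψ₀ (p - 1))
  have hB := mul_nonneg (hp.trans hpq).le (setIntegral_Ioi_mul_rpow_nonneg hψ₀ (q - 1))
  calc _ ≤ (((q * ∫ r in Ioi (0:ℝ), ψ r * r ^ (q - 1)) ^ (1 / q)) ^ p) ^ (1 / p) :=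
        Real.rpow_le_rpow hA (mul_integral_mul_rpow_le hp hpq.le hψ hIp hIq) (by positivity)
    _ = _ := by rw [one_div p, Real.rpow_rpow_inv (by positivity) hp.ne']

/-- monotonicity of `p ↦ I_p(ψ)` for `p > 0`. -/
theorem Ip_mono (ψ : ℝ → ℝ) (hmeas : Measurable ψ) (hnonneg : ∀ r, 0 ≤ ψ r)
    (hbdd : ∀ᵐ r ∂(volume.restrict (Ici (0:ℝ))), ψ r ≤ 1)
    (hsup : essSup ψ (volume.restrict (Ici (0:ℝ))) = 1)
    (p q : ℝ) (hp : 0 < p) (hpq : p < q)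
    (hIp : IntegrableOn (fun r => ψ r * r ^ (p - 1)) (Ioi 0))
    (hIq : IntegrableOn (fun r => ψ r * r ^ (q - 1)) (Ioi 0)) :
    (p * ∫ r in Ioi (0:ℝ), ψ r * r ^ (p - 1)) ^ (1 / p)
      ≤ (q * ∫ r in Ioi (0:ℝ), ψ r * r ^ (q - 1)) ^ (1 / q) :=
  Ip_mono_general ψ hnonneg hbdd p q hp hpq hIp hIq
end

section
/- Let ψ : ℝ≥0 → ℝ≥0 be measurable with ‖ψ‖_∞ = 1 and suppose there is a > 0 with I_p(ψ) = a and I_q(ψ) = a for some 0 < p < q, where I_p(ψ) = (p ∫_0^∞ ψ(r) r^{p-1} dr)^{1/p}. Then ψ = χ_{[0,a]} almost everywhere. -/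
open MeasureTheory Set Filter

/-!
Both `ψ` and `χ = χ_{[0,a]}` have `s`-moment `∫₀^∞ f(r) r^{s-1} dr = a^s / s` for `s = p, q`, so
`ψ - χ` integrates to zero against `w(r) = r^{q-1} - a^{q-p} r^{p-1} = r^{p-1} (r^{q-p} - a^{q-p})`.
Since `0 ≤ ψ ≤ 1`, the difference `ψ - χ` is `≤ 0` on `[0,a]` and `≥ 0` beyond, as is `w`; hence
`(ψ - χ) w ≥ 0` has integral zero and vanishes a.e., and `w` vanishes only at `r = a`.
-/

theorem ae_le_of_essSup_eq {α : Type*} [MeasurableSpace α] {μ : Measure α} {f : α → ℝ} {c : ℝ}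
    (hf : essSup f μ = c) (hc : c ≠ 0) : ∀ᵐ x ∂μ, f x ≤ c := by
  have hbdd : IsBoundedUnder (· ≤ ·) (ae μ) f := by
    -- otherwise `essSup f μ` takes the junk value `0`
    by_contra h
    exact hc (hf ▸ Real.limsup_of_not_isBoundedUnder h)
  exact hf ▸ ae_le_essSup hbdd

theorem ae_eq_of_integral_sub_mul_eq_zero {α : Type*} [MeasurableSpace α] {μ : Measure α}
    {f g w : α → ℝ} (hint : Integrable (fun x ↦ (f x - g x) * w x) μ)
    (hnonneg : ∀ᵐ x ∂μ, 0 ≤ (f x - g x) * w x) (hzero : ∫ x, (f x - g x) * w x ∂μ = 0)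
    (hw : ∀ᵐ x ∂μ, w x ≠ 0) : f =ᵐ[μ] g := by
  have hprod := (integral_eq_zero_iff_of_nonneg_ae hnonneg hint).1 hzero
  filter_upwards [hprod, hw] with x hx hwx
  exact sub_eq_zero.1 ((mul_eq_zero.1 hx).resolve_right hwx)

theorem eq_rpow_div_of_mul_rpow_one_div_eq {s x a : ℝ} (hs : 0 < s) (hx : 0 ≤ x)
    (h : (s * x) ^ (1 / s) = a) : x = a ^ s / s := by
  rw [← h, one_div, Real.rpow_inv_rpow (mul_nonneg hs.le hx) hs.ne']
  field_simp

theorem sub_mul_sub_const_mul_eq {α : Type*} (f g u v : α → ℝ) (c : ℝ) :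
    (fun x ↦ (f x - g x) * (v x - c * u x)) =
      fun x ↦ (f x * v x - c * (f x * u x)) - (g x * v x - c * (g x * u x)) := by
  ext x; ring

section MomentIdentity

variable {α : Type*} [MeasurableSpace α] {μ : Measure α} {f g u v : α → ℝ}

theorem integrable_sub_mul_sub_const_mul (hfu : Integrable (fun x ↦ f x * u x) μ)
    (hfv : Integrable (fun x ↦ f x * v x) μ) (hgu : Integrable (fun x ↦ g x * u x) μ)
    (hgv : Integrable (fun x ↦ g x * v x) μ) (c : ℝ) :
    Integrable (fun x ↦ (f x - g x) * (v x - c * u x)) μ := by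
  rw [sub_mul_sub_const_mul_eq]
  exact (hfv.sub (hfu.const_mul c)).sub (hgv.sub (hgu.const_mul c))

theorem integral_sub_mul_sub_const_mul_eq_zero (hfu : Integrable (fun x ↦ f x * u x) μ)
    (hfv : Integrable (fun x ↦ f x * v x) μ) (hgu : Integrable (fun x ↦ g x * u x) μ)
    (hgv : Integrable (fun x ↦ g x * v x) μ) (c : ℝ)
    (hu : ∫ x, f x * u x ∂μ = ∫ x, g x * u x ∂μ) (hv : ∫ x, f x * v x ∂μ = ∫ x, g x * v x ∂μ) :
    ∫ x, (f x - g x) * (v x - c * u x) ∂μ = 0 := by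
  have hf : Integrable (fun x ↦ f x * v x - c * (f x * u x)) μ := hfv.sub (hfu.const_mul c)
  have hg : Integrable (fun x ↦ g x * v x - c * (g x * u x)) μ := hgv.sub (hgu.const_mul c)
  rw [sub_mul_sub_const_mul_eq, integral_sub hf hg, integral_sub hfv (hfu.const_mul c),
    integral_sub hgv (hgu.const_mul c), integral_const_mul, integral_const_mul, hu, hv, sub_self]

end MomentIdentity

/-- The moment `∫₀^∞ f(r) r^{s-1} dr`, so that `I_s(f) = (s * rpowMoment f s) ^ (1 / s)`. -/
noncomputable def rpowMoment (f : ℝ → ℝ) (s : ℝ) : ℝ := ∫ r in Ioi 0, f r * r ^ (s - 1)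

theorem rpowMoment_nonneg {f : ℝ → ℝ} (hf : ∀ r, 0 ≤ f r) (s : ℝ) : 0 ≤ rpowMoment f s :=
  setIntegral_nonneg measurableSet_Ioi fun r hr ↦
    mul_nonneg (hf r) (Real.rpow_nonneg (le_of_lt hr) _)

section Indicator

theorem Icc_inter_Ioi_zero (a : ℝ) : Icc 0 a ∩ Ioi 0 = Ioc 0 a := by
  ext r
  simp only [mem_inter_iff, mem_Icc, mem_Ioc, mem_Ioi]
  exact ⟨fun h ↦ ⟨h.2, h.1.2⟩, fun h ↦ ⟨⟨h.1.le, h.2⟩, h.1⟩⟩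

theorem indicator_Icc_one_mul_rpow (a s : ℝ) :
    (fun r : ℝ ↦ (Icc 0 a).indicator 1 r * r ^ (s - 1)) = (Icc 0 a).indicator (· ^ (s - 1)) := by
  ext r
  by_cases h : r ∈ Icc 0 a <;> simp [h]

variable {a s : ℝ}

theorem integrableOn_indicator_Icc_mul_rpow (hs : 0 < s) :
    IntegrableOn (fun r ↦ (Icc 0 a).indicator 1 r * r ^ (s - 1)) (Ioi 0) := by
  rw [indicator_Icc_one_mul_rpow, IntegrableOn, integrable_indicator_iff measurableSet_Icc,
    IntegrableOn, Measure.restrict_restrict measurableSet_Icc, Icc_inter_Ioi_zero]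
  exact (intervalIntegral.intervalIntegrable_rpow' (by linarith)).1

theorem rpowMoment_indicator_Icc (hs : 0 < s) (ha : 0 ≤ a) :
    rpowMoment ((Icc 0 a).indicator 1) s = a ^ s / s := by
  rw [rpowMoment, indicator_Icc_one_mul_rpow, setIntegral_indicator measurableSet_Icc,
    inter_comm, Icc_inter_Ioi_zero, ← intervalIntegral.integral_of_le ha,
    integral_rpow (Or.inl (by linarith)), sub_add_cancel, Real.zero_rpow hs.ne', sub_zero]

end Indicator

section Weight

variable {p q a r : ℝ}

theorem rpow_sub_one_sub_mul_rpow_sub_one (hr : 0 < r) :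
    r ^ (q - 1) - a ^ (q - p) * r ^ (p - 1) = r ^ (p - 1) * (r ^ (q - p) - a ^ (q - p)) := by
  rw [mul_sub, ← Real.rpow_add hr, mul_comm]
  ring_nf

theorem rpow_sub_one_sub_mul_rpow_sub_one_ne_zero (hpq : p < q) (ha : 0 ≤ a) (hr : 0 < r)
    (hra : r ≠ a) : r ^ (q - 1) - a ^ (q - p) * r ^ (p - 1) ≠ 0 := by
  rw [rpow_sub_one_sub_mul_rpow_sub_one hr]
  refine mul_ne_zero (Real.rpow_pos_of_pos hr _).ne' (sub_ne_zero.2 fun h ↦ hra ?_)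
  exact (Real.rpow_left_injOn (by linarith : q - p ≠ 0)).eq_iff hr.le ha |>.1 h

/-- The weight has the sign of `r - a`, and so does `y - χ_{[0,a]}(r)` when `0 ≤ y ≤ 1`. -/
theorem sub_indicator_mul_weight_nonneg (hpq : p < q) (ha : 0 ≤ a) (hr : 0 < r) {y : ℝ}
    (hy₀ : 0 ≤ y) (hy₁ : y ≤ 1) :
    0 ≤ (y - (Icc 0 a).indicator 1 r) * (r ^ (q - 1) - a ^ (q - p) * r ^ (p - 1)) := by
  rw [rpow_sub_one_sub_mul_rpow_sub_one hr, mul_left_comm]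
  refine mul_nonneg (Real.rpow_pos_of_pos hr _).le ?_
  rcases le_or_gt r a with hra | hra
  · rw [indicator_of_mem (show r ∈ Icc 0 a from ⟨hr.le, hra⟩), Pi.one_apply]
    exact mul_nonneg_of_nonpos_of_nonpos (by linarith)
      (sub_nonpos.2 (Real.rpow_le_rpow hr.le hra (by linarith)))
  · rw [indicator_of_notMem fun h ↦ hra.not_ge h.2, sub_zero]
    exact mul_nonneg hy₀ (sub_nonneg.2 (Real.rpow_le_rpow ha hra.le (by linarith)))

end Weight

theorem Ip_eq_case_general (ψ : ℝ → ℝ) (hnonneg : ∀ r, 0 ≤ ψ r)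
    (hsup : essSup ψ (volume.restrict (Ici (0:ℝ))) = 1)
    (p q : ℝ) (hp : 0 < p) (hpq : p < q)
    (hIp : IntegrableOn (fun r => ψ r * r ^ (p - 1)) (Ioi 0))
    (hIq : IntegrableOn (fun r => ψ r * r ^ (q - 1)) (Ioi 0))
    (a : ℝ) (ha : 0 < a)
    (hpa : (p * ∫ r in Ioi (0:ℝ), ψ r * r ^ (p - 1)) ^ (1 / p) = a)
    (hqa : (q * ∫ r in Ioi (0:ℝ), ψ r * r ^ (q - 1)) ^ (1 / q) = a) :
    ∀ᵐ r ∂(volume.restrict (Ici (0:ℝ))), ψ r = Set.indicator (Icc (0:ℝ) a) 1 r := by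
  have hq : 0 < q := hp.trans hpq
  have hle : ∀ᵐ r ∂volume.restrict (Ioi 0), ψ r ≤ 1 :=
    ae_restrict_of_ae_restrict_of_subset Ioi_subset_Ici_self (ae_le_of_essSup_eq hsup one_ne_zero)
  have hmoment {s : ℝ} (hs : 0 < s) (h : (s * rpowMoment ψ s) ^ (1 / s) = a) :
      rpowMoment ψ s = rpowMoment ((Icc 0 a).indicator 1) s := by
    rw [rpowMoment_indicator_Icc hs ha.le]
    exact eq_rpow_div_of_mul_rpow_one_div_eq hs (rpowMoment_nonneg hnonneg s) h
  have hχp := integrableOn_indicator_Icc_mul_rpow (a := a) hp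
  have hχq := integrableOn_indicator_Icc_mul_rpow (a := a) hq
  rw [← Measure.restrict_congr_set Ioi_ae_eq_Ici]
  refine ae_eq_of_integral_sub_mul_eq_zero
    (integrable_sub_mul_sub_const_mul hIp hIq hχp hχq (a ^ (q - p))) ?_
    (integral_sub_mul_sub_const_mul_eq_zero hIp hIq hχp hχq _ (hmoment hp hpa)
      (hmoment hq hqa)) ?_
  · filter_upwards [hle, ae_restrict_mem measurableSet_Ioi] with r hr₁ hr
    exact sub_indicator_mul_weight_nonneg hpq ha.le hr (hnonneg r) hr₁
  · filter_upwards [ae_restrict_mem measurableSet_Ioi, ae_restrict_of_ae (volume.ae_ne a)]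
      with r hr hra
    exact rpow_sub_one_sub_mul_rpow_sub_one_ne_zero hpq ha.le hr hra

/-- equality case in the monotonicity of `p ↦ I_p(ψ)`:
if `I_p(ψ) = I_q(ψ) = a` for some `0 < p < q`, then `ψ = χ_{[0,a]}` a.e. on `[0,∞)`. -/
theorem Ip_eq_case (ψ : ℝ → ℝ) (hmeas : Measurable ψ) (hnonneg : ∀ r, 0 ≤ ψ r)
    (hsup : essSup ψ (volume.restrict (Ici (0:ℝ))) = 1)
    (p q : ℝ) (hp : 0 < p) (hpq : p < q)
    (hIp : IntegrableOn (fun r => ψ r * r ^ (p - 1)) (Ioi 0))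
    (hIq : IntegrableOn (fun r => ψ r * r ^ (q - 1)) (Ioi 0))
    (a : ℝ) (ha : 0 < a)
    (hpa : (p * ∫ r in Ioi (0:ℝ), ψ r * r ^ (p - 1)) ^ (1 / p) = a)
    (hqa : (q * ∫ r in Ioi (0:ℝ), ψ r * r ^ (q - 1)) ^ (1 / q) = a) :
    ∀ᵐ r ∂(volume.restrict (Ici (0:ℝ))), ψ r = Set.indicator (Icc (0:ℝ) a) 1 r :=
  Ip_eq_case_general ψ hnonneg hsup p q hp hpq hIp hIq a ha hpa hqa
end

section
/- Let ψ : ℝ≥0 → ℝ≥0 be a bounded measurable function whose essential support equals [0,R] for some R > 0. Then lim_{p→∞} (p/‖ψ‖_∞ ∫_0^∞ ψ(r) r^{p-1} dr)^{1/p} = R. -/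
/-!
Since `ψ ≤ M` and `ψ` vanishes a.e. beyond `R`, the integral is at most `M R^p / p`, so the
`p`-th root is at most `R`. Conversely, for `0 < a < R` the point `R` lies in the essential support,
so `c = ∫_a^∞ ψ > 0`; as `r^{p-1} ≥ a^{p-1}` there, the `p`-th root is at least
`(p c / (M a))^{1/p} a`, which tends to `a`.
-/

open MeasureTheory Set

/-- The essential support of `ψ : ℝ → ℝ` inside `[0,∞)`: the set of points `t ≥ 0` having no
neighborhood on which `ψ` vanishes almost everywhere. -/
def essSupport (ψ : ℝ → ℝ) : Set ℝ :=
  {t : ℝ | 0 ≤ t ∧ ∀ r > 0, 0 < volume {s ∈ Ioo (t - r) (t + r) ∩ Ici 0 | ψ s ≠ 0}}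

open Filter Topology

noncomputable def Ip (ψ : ℝ → ℝ) (M p : ℝ) : ℝ :=
  ((p / M) * ∫ r in Ioi (0:ℝ), ψ r * r ^ (p - 1)) ^ (1 / p)

variable {ψ : ℝ → ℝ} {M R p a b : ℝ}

lemma ae_eq_zero_of_lt_of_essSupport_subset_Iic (hR : 0 ≤ R) (h : essSupport ψ ⊆ Iic R) :
    ∀ᵐ r, R < r → ψ r = 0 := by
  rw [MeasureTheory.ae_iff]
  refine measure_null_of_locally_null _ fun x hx => ?_
  obtain ⟨hRx, -⟩ := Classical.not_imp.1 hx
  have hx0 : 0 ≤ x := hR.trans hRx.le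
  obtain ⟨ε, hε, hnull⟩ : ∃ ε > 0, volume {s ∈ Ioo (x - ε) (x + ε) ∩ Ici 0 | ψ s ≠ 0} = 0 := by
    have hx' : x ∉ essSupport ψ := fun hx' => (h hx').not_gt hRx
    simpa [essSupport, hx0] using hx'
  have hball : Ioo (x - ε) (x + ε) ∈ 𝓝 x := Ioo_mem_nhds (by linarith) (by linarith)
  refine ⟨_, inter_mem_nhdsWithin _ hball, measure_mono_null ?_ hnull⟩
  rintro y ⟨hyR, hy⟩
  obtain ⟨hRy, hψy⟩ := Classical.not_imp.1 hyR
  exact ⟨⟨hy, hR.trans hRy.le⟩, hψy⟩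

lemma measure_support_inter_Ioi_pos {t : ℝ} (ht : t ∈ essSupport ψ) (hat : a < t) :
    0 < volume (Function.support ψ ∩ Ioi a) :=
  (ht.2 (t - a) (sub_pos.2 hat)).trans_le <| measure_mono fun s ⟨⟨hs, _⟩, hψs⟩ =>
    ⟨hψs, show a < s by linarith [hs.1]⟩

lemma tendsto_mul_mul_rpow_rpow_one_div {K : ℝ} (hK : 0 < K) (ha : 0 < a) :
    Tendsto (fun p => (p * K * a ^ p) ^ (1 / p)) atTop (𝓝 a) := by
  have hK' : Tendsto (fun p : ℝ => K ^ (1 / p)) atTop (𝓝 1) := by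
    simpa using tendsto_const_nhds.rpow tendsto_inv_atTop_zero (Or.inl hK.ne')
  have hlim := (tendsto_rpow_div.mul hK').mul_const a
  rw [one_mul, one_mul] at hlim
  refine hlim.congr' ?_
  filter_upwards [eventually_gt_atTop 0] with p hp
  rw [Real.mul_rpow (by positivity) (by positivity), Real.mul_rpow hp.le hK.le,
    ← Real.rpow_mul ha.le, mul_one_div_cancel hp.ne', Real.rpow_one]

lemma integrableOn_Ioi_indicator_Iic_rpow (hp : 0 < p) (hR : 0 ≤ R) :
    IntegrableOn ((Iic R).indicator fun r => M * r ^ (p - 1)) (Ioi 0) := by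
  rw [integrableOn_indicator_iff measurableSet_Iic, inter_comm, Ioi_inter_Iic,
    ← intervalIntegrable_iff_integrableOn_Ioc_of_le hR]
  exact (intervalIntegral.intervalIntegrable_rpow' (by linarith)).const_mul M

lemma setIntegral_Ioi_indicator_Iic_rpow (hp : 0 < p) (hR : 0 ≤ R) :
    ∫ r in Ioi 0, (Iic R).indicator (fun r => M * r ^ (p - 1)) r = M * (R ^ p / p) := by
  rw [setIntegral_indicator measurableSet_Iic, Ioi_inter_Iic, ← intervalIntegral.integral_of_le hR,
    intervalIntegral.integral_const_mul, integral_rpow (Or.inl (by linarith)), sub_add_cancel,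
    Real.zero_rpow hp.ne', sub_zero]

lemma mul_rpow_nonneg_ae (hnonneg : ∀ r, 0 ≤ ψ r) :
    0 ≤ᵐ[volume.restrict (Ioi 0)] fun r => ψ r * r ^ (p - 1) := by
  filter_upwards [ae_restrict_mem measurableSet_Ioi] with r hr
  exact mul_nonneg (hnonneg r) (Real.rpow_nonneg (le_of_lt hr) _)

lemma mul_rpow_le_indicator_ae
    (hψ : ∀ᵐ r ∂volume.restrict (Ioi 0), ψ r ≤ (Iic R).indicator (fun _ => M) r) :
    (fun r => ψ r * r ^ (p - 1)) ≤ᵐ[volume.restrict (Ioi 0)]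
      (Iic R).indicator fun r => M * r ^ (p - 1) := by
  filter_upwards [hψ, ae_restrict_mem measurableSet_Ioi] with r h hr
  rw [indicator_mul_left]
  exact mul_le_mul_of_nonneg_right h (Real.rpow_nonneg (le_of_lt hr) _)

lemma integrableOn_Ioi_mul_rpow (hmeas : Measurable ψ) (hnonneg : ∀ r, 0 ≤ ψ r)
    (hψ : ∀ᵐ r ∂volume.restrict (Ioi 0), ψ r ≤ (Iic R).indicator (fun _ => M) r)
    (hp : 0 < p) (hR : 0 ≤ R) :
    IntegrableOn (fun r => ψ r * r ^ (p - 1)) (Ioi 0) := by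
  refine (integrableOn_Ioi_indicator_Iic_rpow (M := M) hp hR).mono'
    (hmeas.mul (measurable_id.pow_const _)).aestronglyMeasurable ?_
  filter_upwards [mul_rpow_le_indicator_ae hψ, mul_rpow_nonneg_ae hnonneg] with r hle h0
  rwa [Real.norm_of_nonneg h0]

lemma setIntegral_Ioi_mul_rpow_le (hnonneg : ∀ r, 0 ≤ ψ r)
    (hψ : ∀ᵐ r ∂volume.restrict (Ioi 0), ψ r ≤ (Iic R).indicator (fun _ => M) r)
    (hp : 0 < p) (hR : 0 ≤ R) :
    ∫ r in Ioi 0, ψ r * r ^ (p - 1) ≤ M * (R ^ p / p) :=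
  setIntegral_Ioi_indicator_Iic_rpow (M := M) hp hR ▸ integral_mono_of_nonneg
    (mul_rpow_nonneg_ae hnonneg) (integrableOn_Ioi_indicator_Iic_rpow (M := M) hp hR)
    (mul_rpow_le_indicator_ae hψ)

lemma rpow_mul_setIntegral_Ioi_le (hnonneg : ∀ r, 0 ≤ ψ r)
    (hint : IntegrableOn (fun r => ψ r * r ^ (p - 1)) (Ioi 0))
    (hintψ : IntegrableOn ψ (Ioi a)) (ha : 0 < a) (hp : 1 ≤ p) :
    a ^ (p - 1) * ∫ r in Ioi a, ψ r ≤ ∫ r in Ioi 0, ψ r * r ^ (p - 1) := by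
  rw [← integral_const_mul]
  calc ∫ r in Ioi a, a ^ (p - 1) * ψ r
      ≤ ∫ r in Ioi a, ψ r * r ^ (p - 1) :=
        setIntegral_mono_on (hintψ.const_mul _) (hint.mono_set (Ioi_subset_Ioi ha.le))
          measurableSet_Ioi fun r hr => by
            rw [mul_comm]
            exact mul_le_mul_of_nonneg_left
              (Real.rpow_le_rpow ha.le (le_of_lt hr) (by linarith)) (hnonneg r)
    _ ≤ ∫ r in Ioi 0, ψ r * r ^ (p - 1) :=
        setIntegral_mono_set hint (mul_rpow_nonneg_ae hnonneg)
          (Ioi_subset_Ioi ha.le).eventuallyLE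

lemma Ip_le (hM : 0 < M) (hnonneg : ∀ r, 0 ≤ ψ r)
    (hψ : ∀ᵐ r ∂volume.restrict (Ioi 0), ψ r ≤ (Iic R).indicator (fun _ => M) r)
    (hp : 0 < p) (hR : 0 ≤ R) : Ip ψ M p ≤ R := by
  have hbase : (p / M) * ∫ r in Ioi 0, ψ r * r ^ (p - 1) ≤ R ^ p :=
    calc (p / M) * ∫ r in Ioi 0, ψ r * r ^ (p - 1)
        ≤ (p / M) * (M * (R ^ p / p)) :=
          mul_le_mul_of_nonneg_left (setIntegral_Ioi_mul_rpow_le hnonneg hψ hp hR) (by positivity)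
      _ = R ^ p := by field_simp
  calc Ip ψ M p ≤ (R ^ p) ^ (1 / p) :=
        Real.rpow_le_rpow (mul_nonneg (by positivity)
          (integral_nonneg_of_ae (mul_rpow_nonneg_ae hnonneg))) hbase (by positivity)
    _ = R := by rw [← Real.rpow_mul hR, mul_one_div_cancel hp.ne', Real.rpow_one]

lemma eventually_lt_Ip (hM : 0 < M) (hmeas : Measurable ψ) (hnonneg : ∀ r, 0 ≤ ψ r)
    (hψ : ∀ᵐ r ∂volume.restrict (Ioi 0), ψ r ≤ (Iic R).indicator (fun _ => M) r) (hR : 0 ≤ R)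
    (ha : 0 < a) (hba : b < a) (hpos : 0 < volume (Function.support ψ ∩ Ioi a)) :
    ∀ᶠ p in atTop, b < Ip ψ M p := by
  have hint (p : ℝ) (hp : 0 < p) := integrableOn_Ioi_mul_rpow hmeas hnonneg hψ hp hR
  have hintψ : IntegrableOn ψ (Ioi a) := by
    simpa using (hint 1 one_pos).mono_set (Ioi_subset_Ioi ha.le)
  set c := ∫ r in Ioi a, ψ r
  have hc : 0 < c :=
    (setIntegral_pos_iff_support_of_nonneg_ae (ae_of_all _ hnonneg) hintψ).2 hpos
  have hlim := tendsto_mul_mul_rpow_rpow_one_div (K := c / (M * a)) (by positivity) ha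
  filter_upwards [hlim.eventually (lt_mem_nhds hba), eventually_ge_atTop 1] with p hlt hp
  have hp0 : 0 < p := by linarith
  refine hlt.trans_le (Real.rpow_le_rpow (by positivity) ?_ (by positivity))
  calc p * (c / (M * a)) * a ^ p = p / M * (a ^ (p - 1) * c) := by
        rw [Real.rpow_sub_one ha.ne']; field_simp
    _ ≤ p / M * ∫ r in Ioi 0, ψ r * r ^ (p - 1) :=
        mul_le_mul_of_nonneg_left
          (rpow_mul_setIntegral_Ioi_le hnonneg (hint p hp0) hintψ ha hp) (by positivity)

theorem Ip_tendsto_of_essSupport_Icc_general (ψ : ℝ → ℝ) (hmeas : Measurable ψ)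
    (hnonneg : ∀ r, 0 ≤ ψ r) (M : ℝ) (hM : 0 < M)
    (hbdd : ∀ᵐ r ∂(volume.restrict (Ici (0:ℝ))), ψ r ≤ M)
    (R : ℝ) (hR : 0 < R) (hsupp : essSupport ψ = Icc 0 R) :
    Filter.Tendsto (fun p : ℝ => ((p / M) * ∫ r in Ioi (0:ℝ), ψ r * r ^ (p - 1)) ^ (1 / p))
      Filter.atTop (nhds R) := by
  have hzero := ae_eq_zero_of_lt_of_essSupport_subset_Iic hR.le (hsupp ▸ Icc_subset_Iic_self)
  have hψ : ∀ᵐ r ∂volume.restrict (Ioi 0), ψ r ≤ (Iic R).indicator (fun _ => M) r := by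
    filter_upwards [ae_restrict_of_ae_restrict_of_subset Ioi_subset_Ici_self hbdd,
      ae_restrict_of_ae hzero] with r hrM hr0
    by_cases hrR : r ≤ R
    · simpa [hrR] using hrM
    · simp [hrR, hr0 (not_le.1 hrR)]
  change Tendsto (Ip ψ M) atTop (𝓝 R)
  refine tendsto_order.2 ⟨fun b hb => ?_, fun b hb => ?_⟩
  · obtain ⟨a, hba, haR⟩ := exists_between (max_lt hb hR)
    exact eventually_lt_Ip hM hmeas hnonneg hψ hR.le ((le_max_right _ _).trans_lt hba)
      ((le_max_left _ _).trans_lt hba)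
      (measure_support_inter_Ioi_pos (hsupp ▸ right_mem_Icc.2 hR.le) haR)
  · filter_upwards [eventually_gt_atTop 0] with p hp
    exact (Ip_le hM hnonneg hψ hp hR.le).trans_lt hb

/-- if the essential support of a bounded measurable `ψ ≥ 0` equals `[0,R]`,
then `I_p(ψ) = (p/‖ψ‖_∞ ∫_0^∞ ψ(r) r^{p-1} dr)^{1/p} → R` as `p → ∞`. -/
theorem Ip_tendsto_of_essSupport_Icc (ψ : ℝ → ℝ) (hmeas : Measurable ψ)
    (hnonneg : ∀ r, 0 ≤ ψ r) (M : ℝ) (hM : 0 < M)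
    (hMsup : essSup ψ (volume.restrict (Ici (0:ℝ))) = M)
    (hbdd : ∀ᵐ r ∂(volume.restrict (Ici (0:ℝ))), ψ r ≤ M)
    (R : ℝ) (hR : 0 < R) (hsupp : essSupport ψ = Icc 0 R) :
    Filter.Tendsto (fun p : ℝ => ((p / M) * ∫ r in Ioi (0:ℝ), ψ r * r ^ (p - 1)) ^ (1 / p))
      Filter.atTop (nhds R) :=
  Ip_tendsto_of_essSupport_Icc_general ψ hmeas hnonneg M hM hbdd R hR hsupp
end

section
/- Let ψ : ℝ≥0 → ℝ≥0 be measurable with ψ(0) = ‖ψ‖_∞ = 1, decaying to zero at infinity and α-Hölder continuous near 0. For -1 < p < 0 define I_p(ψ) = (p ∫_0^∞ r^{p-1}(ψ(r) - 1) dr)^{1/p}. Then p ↦ I_p(ψ) is monotone increasing on (-1, 0). -/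
open MeasureTheory Set Real
open scoped ENNReal

/-!
Write `G θ = θ ∫₀^∞ r^(θ-1) (ψ r - 1) dr = ∫ (1 - ψ) dν_θ`, where `ν_θ` has density
`-θ r^(θ-1)` on `(0, ∞)`. By the layer-cake formula `G θ = ∫₀^1 ν_θ {1 - ψ > t} dt`.
The substitution `s = r^p` turns `ν_p` into Lebesgue measure and `ν_q` into the measure with the
decreasing density `β s^(β-1)`, `β = q / p ∈ (0, 1)`; by the bathtub principle
`ν_q E ≤ (ν_p E)^β` for every `E`. Jensen's inequality for the concave map `x ↦ x^β` on the
probability space `(0, 1]` gives `G q ≤ (G p)^β`, and raising to the negative power `1 / q`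
gives `(G p)^(1/p) ≤ (G q)^(1/q)`.
-/

theorem setLIntegral_le_setLIntegral_Ioo_of_antitoneOn {A : Set ℝ} (hA : MeasurableSet A)
    (hA0 : A ⊆ Ioi 0) {c : ℝ} (hvol : volume A = ENNReal.ofReal c) {φ : ℝ → ℝ≥0∞}
    (hφ : AntitoneOn φ (Ioi 0)) :
    ∫⁻ s in A, φ s ≤ ∫⁻ s in Ioo 0 c, φ s := by
  rcases le_or_gt c 0 with hc | hc
  · rw [setLIntegral_measure_zero _ _ (hvol.trans (ENNReal.ofReal_eq_zero.2 hc))]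
    exact zero_le
  set I := Ioo 0 c
  have hI : MeasurableSet I := measurableSet_Ioo
  have hAI : volume (A \ I) = volume (I \ A) := by
    have hfin : volume (A ∩ I) ≠ ∞ := measure_ne_top_of_subset inter_subset_right (by simp [I])
    refine (ENNReal.add_left_inj hfin).1 ?_
    rw [measure_sdiff_add_inter _ hI, inter_comm, measure_sdiff_add_inter _ hA, hvol,
      Real.volume_Ioo, sub_zero]
  -- the mass of `A` beyond `c` fits into the gap `I \ A`, where `φ` is larger
  have hout : ∫⁻ s in A \ I, φ s ≤ ∫⁻ _ in A \ I, φ c :=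
    setLIntegral_mono' (hA.diff hI) fun s hs =>
      hφ hc (hA0 hs.1) (not_lt.1 fun h => hs.2 ⟨hA0 hs.1, h⟩)
  have hin : ∫⁻ _ in I \ A, φ c ≤ ∫⁻ s in I \ A, φ s :=
    setLIntegral_mono' (hI.diff hA) fun s hs => hφ hs.1.1 hc hs.1.2.le
  rw [setLIntegral_const, hAI, ← setLIntegral_const] at hout
  calc ∫⁻ s in A, φ s = (∫⁻ s in I ∩ A, φ s) + ∫⁻ s in A \ I, φ s := by
        rw [← lintegral_inter_add_sdiff _ A hI, inter_comm]
    _ ≤ (∫⁻ s in I ∩ A, φ s) + ∫⁻ s in I \ A, φ s := add_le_add_right (hout.trans hin) _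
    _ = ∫⁻ s in I, φ s := lintegral_inter_add_sdiff _ _ hA

theorem lintegral_Ioo_mul_rpow_sub_one {β : ℝ} (hβ : 0 < β) {c : ℝ} (hc : 0 ≤ c) :
    ∫⁻ s in Ioo 0 c, ENNReal.ofReal (β * s ^ (β - 1)) = ENNReal.ofReal (c ^ β) := by
  have hβ' : -1 < β - 1 := by linarith
  have hint : IntegrableOn (fun s : ℝ => β * s ^ (β - 1)) (Ioc 0 c) :=
    ((intervalIntegrable_iff_integrableOn_Ioc_of_le hc).1
      (intervalIntegral.intervalIntegrable_rpow' hβ')).const_mul β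
  rw [← ofReal_integral_eq_lintegral_ofReal (hint.mono_set Ioo_subset_Ioc_self)
    ((ae_restrict_iff' measurableSet_Ioo).2 (ae_of_all _ fun s hs =>
      mul_nonneg hβ.le (rpow_nonneg hs.1.le _))), ← integral_Ioc_eq_integral_Ioo,
    ← intervalIntegral.integral_of_le hc, intervalIntegral.integral_const_mul,
    integral_rpow (Or.inl hβ'), sub_add_cancel, zero_rpow hβ.ne', sub_zero,
    mul_div_cancel₀ _ hβ.ne']

theorem lintegral_image_rpow_of_neg {p : ℝ} (hp : p < 0) {E : Set ℝ} (hE : MeasurableSet E)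
    (hE0 : E ⊆ Ioi 0) (g : ℝ → ℝ≥0∞) :
    ∫⁻ s in (· ^ p) '' E, g s = ∫⁻ x in E, ENNReal.ofReal (-p * x ^ (p - 1)) * g (x ^ p) := by
  rw [lintegral_image_eq_lintegral_abs_deriv_mul hE
    (fun x hx => (hasDerivAt_rpow_const (Or.inl (hE0 hx).ne')).hasDerivWithinAt)
    ((strictAntiOn_rpow_Ioi_of_exponent_neg hp).injOn.mono hE0)]
  refine setLIntegral_congr_fun hE fun x hx => ?_
  rw [abs_mul, abs_of_neg hp, abs_of_pos (rpow_pos_of_pos (hE0 hx) _)]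

theorem setLIntegral_rpow_density_le_rpow {p q : ℝ} (hpq : p < q) (hq : q < 0) {E : Set ℝ}
    (hE : MeasurableSet E) (hE0 : E ⊆ Ioi 0) :
    ∫⁻ r in E, ENNReal.ofReal (-q * r ^ (q - 1))
      ≤ (∫⁻ r in E, ENNReal.ofReal (-p * r ^ (p - 1))) ^ (q / p) := by
  have hp : p < 0 := hpq.trans hq
  set β := q / p
  have hβ : 0 < β := div_pos_of_neg_of_neg hq hp
  have hpβ : p * β = q := mul_div_cancel₀ q hp.ne
  set A := (· ^ p) '' E
  have hA : MeasurableSet A :=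
    hE.image_of_continuousOn_injOn
      (continuousOn_id.rpow_const fun x hx => Or.inl (hE0 hx).ne')
      ((strictAntiOn_rpow_Ioi_of_exponent_neg hp).injOn.mono hE0)
  have hA0 : A ⊆ Ioi 0 := by
    rintro _ ⟨x, hx, rfl⟩
    exact rpow_pos_of_pos (hE0 hx) p
  have hvol : volume A = ∫⁻ r in E, ENNReal.ofReal (-p * r ^ (p - 1)) := by
    simpa using lintegral_image_rpow_of_neg hp hE hE0 1
  have hsubst : ∫⁻ r in E, ENNReal.ofReal (-q * r ^ (q - 1))
      = ∫⁻ s in A, ENNReal.ofReal (β * s ^ (β - 1)) := by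
    rw [lintegral_image_rpow_of_neg hp hE hE0]
    refine setLIntegral_congr_fun hE fun x hx => ?_
    have hx0 : 0 < x := hE0 hx
    rw [← ENNReal.ofReal_mul (mul_nonneg (neg_nonneg.2 hp.le) (rpow_nonneg hx0.le _)),
      ← rpow_mul hx0.le, mul_mul_mul_comm, ← rpow_add hx0]
    congr 3 <;> linarith [hpβ]
  set NP := ∫⁻ r in E, ENNReal.ofReal (-p * r ^ (p - 1))
  rcases eq_or_ne NP ∞ with htop | htop
  · rw [htop, ENNReal.top_rpow_of_pos hβ]
    exact le_top
  calc ∫⁻ r in E, ENNReal.ofReal (-q * r ^ (q - 1))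
      = ∫⁻ s in A, ENNReal.ofReal (β * s ^ (β - 1)) := hsubst
    _ ≤ ∫⁻ s in Ioo 0 NP.toReal, ENNReal.ofReal (β * s ^ (β - 1)) := by
        refine setLIntegral_le_setLIntegral_Ioo_of_antitoneOn hA hA0
          (by rw [hvol, ENNReal.ofReal_toReal htop]) fun x hx y _ hxy => ?_
        gcongr ENNReal.ofReal (β * ?_)
        exact rpow_le_rpow_of_nonpos hx hxy (by linarith [(div_lt_one_of_neg hp).2 hpq])
    _ = NP ^ β := by
        rw [lintegral_Ioo_mul_rpow_sub_one hβ ENNReal.toReal_nonneg, ENNReal.toReal_rpow,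
          ENNReal.ofReal_toReal (ENNReal.rpow_ne_top_of_nonneg hβ.le htop)]

theorem lintegral_ofReal_eq_setLIntegral_Ioc_meas_lt {α : Type*} [MeasurableSpace α]
    (μ : Measure α) {f : α → ℝ} (hf : Measurable f) (h0 : ∀ a, 0 ≤ f a) (h1 : ∀ a, f a ≤ 1) :
    ∫⁻ a, ENNReal.ofReal (f a) ∂μ = ∫⁻ t in Ioc 0 1, μ {a | t < f a} := by
  rw [lintegral_eq_lintegral_meas_lt μ (ae_of_all _ h0) hf.aemeasurable,
    ← Ioc_union_Ioi_eq_Ioi zero_le_one, lintegral_union measurableSet_Ioi Ioc_disjoint_Ioi_same,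
    setLIntegral_congr_fun measurableSet_Ioi fun t ht => ?_, lintegral_zero, add_zero]
  rw [← measure_empty (μ := μ)]
  congr
  exact eq_empty_of_forall_notMem fun a ha => (h1 a).not_gt (lt_trans ht ha)

theorem lintegral_rpow_le_rpow_lintegral {α : Type*} [MeasurableSpace α] {μ : Measure α}
    [IsProbabilityMeasure μ] {β : ℝ} (hβ0 : 0 < β) (hβ1 : β ≤ 1) {f : α → ℝ≥0∞}
    (hf : AEMeasurable f μ) :
    ∫⁻ a, f a ^ β ∂μ ≤ (∫⁻ a, f a ∂μ) ^ β := by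
  have h := eLpNorm'_le_eLpNorm'_of_exponent_le hβ0 hβ1 μ hf.aestronglyMeasurable
  simp only [eLpNorm', enorm_eq_self, ENNReal.rpow_one, div_one] at h
  rwa [← ENNReal.rpow_le_rpow_iff (one_div_pos.2 hβ0), ← ENNReal.rpow_mul,
    mul_one_div_cancel hβ0.ne', ENNReal.rpow_one]

/-- For `θ < 0`, `rpowMeasure θ (Ioi r) = r ^ θ`. -/
noncomputable def rpowMeasure (θ : ℝ) : Measure ℝ :=
  (volume.restrict (Ioi 0)).withDensity fun r => ENNReal.ofReal (-θ * r ^ (θ - 1))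

theorem rpowMeasure_apply (θ : ℝ) {E : Set ℝ} (hE : MeasurableSet E) :
    rpowMeasure θ E = ∫⁻ r in E ∩ Ioi 0, ENNReal.ofReal (-θ * r ^ (θ - 1)) := by
  rw [rpowMeasure, withDensity_apply _ hE, Measure.restrict_restrict hE]

theorem rpowMeasure_le_rpow {p q : ℝ} (hpq : p < q) (hq : q < 0) {E : Set ℝ}
    (hE : MeasurableSet E) : rpowMeasure q E ≤ rpowMeasure p E ^ (q / p) := by
  rw [rpowMeasure_apply q hE, rpowMeasure_apply p hE]
  exact setLIntegral_rpow_density_le_rpow hpq hq (hE.inter measurableSet_Ioi) inter_subset_right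

theorem rpowMeasure_absolutelyContinuous (θ : ℝ) {θ' : ℝ} (hθ' : θ' < 0) :
    rpowMeasure θ ≪ rpowMeasure θ' :=
  (withDensity_absolutelyContinuous _ _).trans <| withDensity_absolutelyContinuous'
    (by fun_prop) ((ae_restrict_iff' measurableSet_Ioi).2 <| ae_of_all _ fun r hr =>
      (ENNReal.ofReal_pos.2 (mul_pos (neg_pos.2 hθ') (rpow_pos_of_pos hr _))).ne')

theorem lintegral_rpowMeasure {θ : ℝ} {f : ℝ → ℝ} (hf : Measurable f) (h0 : ∀ r, 0 ≤ f r) :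
    ∫⁻ r, ENNReal.ofReal (f r) ∂rpowMeasure θ
      = ∫⁻ r in Ioi 0, ENNReal.ofReal (-θ * r ^ (θ - 1) * f r) := by
  rw [rpowMeasure, lintegral_withDensity_eq_lintegral_mul _ (by fun_prop) (by fun_prop)]
  simp only [Pi.mul_apply, ENNReal.ofReal_mul' (h0 _)]

theorem lintegral_rpowMeasure_le_rpow {f : ℝ → ℝ} (hf : Measurable f) (h0 : ∀ r, 0 ≤ f r)
    (h1 : ∀ r, f r ≤ 1) {p q : ℝ} (hpq : p < q) (hq : q < 0) :
    ∫⁻ r, ENNReal.ofReal (f r) ∂rpowMeasure q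
      ≤ (∫⁻ r, ENNReal.ofReal (f r) ∂rpowMeasure p) ^ (q / p) := by
  have hp : p < 0 := hpq.trans hq
  have : IsProbabilityMeasure (volume.restrict (Ioc (0 : ℝ) 1)) := ⟨by simp⟩
  have hanti : Antitone fun t => rpowMeasure p {r | t < f r} :=
    fun s t hst => measure_mono fun r hr => hst.trans_lt hr
  rw [lintegral_ofReal_eq_setLIntegral_Ioc_meas_lt _ hf h0 h1,
    lintegral_ofReal_eq_setLIntegral_Ioc_meas_lt _ hf h0 h1]
  calc ∫⁻ t in Ioc 0 1, rpowMeasure q {r | t < f r}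
      ≤ ∫⁻ t in Ioc 0 1, rpowMeasure p {r | t < f r} ^ (q / p) :=
        lintegral_mono fun t => rpowMeasure_le_rpow hpq hq (measurableSet_lt measurable_const hf)
    _ ≤ (∫⁻ t in Ioc 0 1, rpowMeasure p {r | t < f r}) ^ (q / p) :=
        lintegral_rpow_le_rpow_lintegral (div_pos_of_neg_of_neg hq hp)
          ((div_le_one_of_neg hp).2 hpq.le) hanti.measurable.aemeasurable

theorem mul_integral_rpow_mul_sub_one_eq_toReal {θ : ℝ} (hθ : θ ≤ 0) {ψ : ℝ → ℝ}
    (hψ : Measurable ψ) (hle : ∀ r, ψ r ≤ 1) :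
    θ * ∫ r in Ioi 0, r ^ (θ - 1) * (ψ r - 1)
      = (∫⁻ r, ENNReal.ofReal (1 - ψ r) ∂rpowMeasure θ).toReal := by
  rw [lintegral_rpowMeasure (by fun_prop) fun r => sub_nonneg.2 (hle r),
    ← integral_eq_lintegral_of_nonneg_ae ?_ (by fun_prop), ← integral_const_mul]
  · exact integral_congr_ae (ae_of_all _ fun r => by ring)
  · refine (ae_restrict_iff' measurableSet_Ioi).2 (ae_of_all _ fun r hr => ?_)
    exact mul_nonneg (mul_nonneg (neg_nonneg.2 hθ) (rpow_nonneg hr.le _)) (sub_nonneg.2 (hle r))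

theorem lintegral_rpowMeasure_ne_top {θ : ℝ} {ψ : ℝ → ℝ} (hψ : Measurable ψ)
    (hle : ∀ r, ψ r ≤ 1) (hI : IntegrableOn (fun r => r ^ (θ - 1) * (ψ r - 1)) (Ioi 0)) :
    ∫⁻ r, ENNReal.ofReal (1 - ψ r) ∂rpowMeasure θ ≠ ∞ := by
  rw [lintegral_rpowMeasure (by fun_prop) fun r => sub_nonneg.2 (hle r)]
  convert (hI.const_mul θ).lintegral_lt_top.ne using 4
  ring

theorem toReal_rpow_one_div_le {x y : ℝ≥0∞} {p q : ℝ} (hpq : p < q) (hq : q < 0) (hx : x ≠ ∞)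
    (hyx : y ≤ x ^ (q / p)) (hy : y = 0 → x = 0) : x.toReal ^ (1 / p) ≤ y.toReal ^ (1 / q) := by
  have hp : p < 0 := hpq.trans hq
  -- junk value: `0 ^ (1 / q) = 0` although `1 / q < 0`
  rcases eq_or_ne y 0 with rfl | hy0
  · simp [hy rfl, hp.ne, hq.ne]
  have hxβ : x ^ (q / p) ≠ ∞ := ENNReal.rpow_ne_top_of_nonneg (div_pos_of_neg_of_neg hq hp).le hx
  calc x.toReal ^ (1 / p) = (x.toReal ^ (q / p)) ^ (1 / q) := by
        rw [← rpow_mul ENNReal.toReal_nonneg]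
        congr 1
        field_simp [hq.ne]
    _ ≤ y.toReal ^ (1 / q) := by
        refine rpow_le_rpow_of_nonpos (ENNReal.toReal_pos hy0 (ne_top_of_le_ne_top hxβ hyx)) ?_
          (one_div_neg.2 hq).le
        rw [ENNReal.toReal_rpow]
        exact ENNReal.toReal_mono hxβ hyx

theorem Ip_mono_neg_general (ψ : ℝ → ℝ) (hmeas : Measurable ψ) (hnonneg : ∀ r, 0 ≤ ψ r)
    (hle : ∀ r, ψ r ≤ 1)
    (p q : ℝ) (hpq : p < q) (hq : q < 0)
    (hIp : IntegrableOn (fun r => r ^ (p - 1) * (ψ r - 1)) (Ioi 0)) :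
    (p * ∫ r in Ioi (0:ℝ), r ^ (p - 1) * (ψ r - 1)) ^ (1 / p)
      ≤ (q * ∫ r in Ioi (0:ℝ), r ^ (q - 1) * (ψ r - 1)) ^ (1 / q) := by
  have hf : Measurable fun r => 1 - ψ r := by fun_prop
  have h0 : ∀ r, 0 ≤ 1 - ψ r := fun r => sub_nonneg.2 (hle r)
  have h1 : ∀ r, 1 - ψ r ≤ 1 := fun r => by linarith [hnonneg r]
  rw [mul_integral_rpow_mul_sub_one_eq_toReal (hpq.trans hq).le hmeas hle,
    mul_integral_rpow_mul_sub_one_eq_toReal hq.le hmeas hle]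
  refine toReal_rpow_one_div_le hpq hq (lintegral_rpowMeasure_ne_top hmeas hle hIp)
    (lintegral_rpowMeasure_le_rpow hf h0 h1 hpq hq) fun h => ?_
  -- both integrals vanish exactly when `ψ = 1` a.e. on `(0, ∞)`
  rw [lintegral_eq_zero_iff (by fun_prop)] at h ⊢
  exact (rpowMeasure_absolutelyContinuous p hq).ae_le h

/-- for `ψ` with maximum `1` at `0`, decaying at infinity and Hölder near `0`,
the map `p ↦ I_p(ψ) = (p ∫_0^∞ r^{p-1}(ψ(r)-1) dr)^{1/p}` is increasing on `(-1,0)`. -/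
theorem Ip_mono_neg (ψ : ℝ → ℝ) (hmeas : Measurable ψ) (hnonneg : ∀ r, 0 ≤ ψ r)
    (hle : ∀ r, ψ r ≤ 1) (hψ0 : ψ 0 = 1)
    (hdecay : Filter.Tendsto ψ Filter.atTop (nhds 0))
    (α C : ℝ) (hα : 0 < α) (hC : 0 < C)
    (hHolder : ∀ r ∈ Icc (0:ℝ) 1, |ψ r - 1| ≤ C * r ^ α)
    (p q : ℝ) (hp : -1 < p) (hpq : p < q) (hq : q < 0) (hαp : -p < α)
    (hIp : IntegrableOn (fun r => r ^ (p - 1) * (ψ r - 1)) (Ioi 0))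
    (hIq : IntegrableOn (fun r => r ^ (q - 1) * (ψ r - 1)) (Ioi 0)) :
    (p * ∫ r in Ioi (0:ℝ), r ^ (p - 1) * (ψ r - 1)) ^ (1 / p)
      ≤ (q * ∫ r in Ioi (0:ℝ), r ^ (q - 1) * (ψ r - 1)) ^ (1 / q) :=
  Ip_mono_neg_general ψ hmeas hnonneg hle p q hpq hq hIp
end

section
/- Let g : ℝⁿ → ℝ≥0 be an upper semicontinuous, integrable, log-concave function with max g = g(0) and 0 ∈ int supp(g). Then for every p ∈ (-1,0) and every x ∈ ℝⁿ, the integral ∫_0^∞ r^{p-1}(g(rx) - g(0)) dr is finite. -/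
/-!
Log-concavity makes the support of `g` convex, so `0` lies in the interior of the support itself
and `g (δ • x) > 0` for some `δ > 0`. On `[0, δ]`, log-concavity along the segment from `0` to
`δ • x` gives `g (r • x) ≥ g 0 * exp (-c r)` for some `c ≥ 0`, hence
`0 ≤ g 0 - g (r • x) ≤ g 0 * c * r`, and the integrand is `O(r ^ p)` with `p > -1`. Beyond `δ`
it is bounded by `g 0 * r ^ (p - 1)` with `p - 1 < -1`.
-/

open MeasureTheory Set Real

/-- The inequality is only required at pairs of points of the support, where `log g` is finite. -/
def IsLogConcave {E : Type*} [AddCommGroup E] [Module ℝ E] (g : E → ℝ) : Prop :=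
  ∀ x y : E, ∀ l : ℝ, 0 < l → l < 1 → 0 < g x * g y →
    g x ^ (1 - l) * g y ^ l ≤ g ((1 - l) • x + l • y)

namespace IsLogConcave

variable {E : Type*} [AddCommGroup E] [Module ℝ E] {g : E → ℝ}

theorem convex_support (hg : IsLogConcave g) (hnonneg : ∀ x, 0 ≤ g x) :
    Convex ℝ (Function.support g) := by
  have hpos : ∀ {x}, x ∈ Function.support g → 0 < g x := fun hx => (hnonneg _).lt_of_ne' hx
  refine convex_iff_forall_pos.2 fun x hx y hy a b ha hb hab => ?_
  obtain rfl : a = 1 - b := by linarith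
  refine (lt_of_lt_of_le ?_ (hg x y b hb (by linarith) (mul_pos (hpos hx) (hpos hy)))).ne'
  exact mul_pos (rpow_pos_of_pos (hpos hx) _) (rpow_pos_of_pos (hpos hy) _)

theorem rpow_mul_rpow_le (hg : IsLogConcave g) {v w : E} (hv : 0 < g v) (hw : 0 < g w)
    {t : ℝ} (ht₀ : 0 ≤ t) (ht₁ : t ≤ 1) :
    g v ^ (1 - t) * g w ^ t ≤ g ((1 - t) • v + t • w) := by
  rcases ht₀.eq_or_lt with rfl | ht₀
  · simp
  rcases ht₁.eq_or_lt with rfl | ht₁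
  · simp
  exact hg v w t ht₀ ht₁ (mul_pos hv hw)

/-- The tangent line at `t = 0` of the convex function `t ↦ (g w / g v) ^ t` gives a linear
lower bound for `g` along the segment from `v` to `w`. -/
theorem sub_le_mul (hg : IsLogConcave g) {v w : E} (hv : 0 < g v) (hw : 0 < g w)
    {t : ℝ} (ht₀ : 0 ≤ t) (ht₁ : t ≤ 1) :
    g v - g ((1 - t) • v + t • w) ≤ t * (g v * (log (g v) - log (g w))) := by
  have hexp : g v ^ (1 - t) * g w ^ t = g v * exp (-(t * (log (g v) - log (g w)))) := by
    rw [rpow_def_of_pos hv, rpow_def_of_pos hw, ← exp_add]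
    conv_rhs => arg 1; rw [← exp_log hv]
    rw [← exp_add]
    ring_nf
  calc g v - g ((1 - t) • v + t • w)
      ≤ g v - g v * exp (-(t * (log (g v) - log (g w)))) := by
        rw [← hexp]; linarith [hg.rpow_mul_rpow_le hv hw ht₀ ht₁]
    _ ≤ g v - g v * (-(t * (log (g v) - log (g w))) + 1) := by
        gcongr; exact add_one_le_exp _
    _ = t * (g v * (log (g v) - log (g w))) := by ring

end IsLogConcave

theorem Convex.interior_closure_eq_interior_of_finiteDimensional {V : Type*}
    [NormedAddCommGroup V] [NormedSpace ℝ V] [FiniteDimensional ℝ V] {s : Set V}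
    (hs : Convex ℝ s) : interior (closure s) = interior s := by
  refine subset_antisymm (fun y hy => ?_) (interior_mono subset_closure)
  suffices (interior s).Nonempty by
    rwa [← hs.interior_closure_eq_interior_of_nonempty_interior this]
  have hclosure : affineSpan ℝ (closure s) = ⊤ :=
    hs.closure.interior_nonempty_iff_affineSpan_eq_top.1 ⟨y, hy⟩
  refine hs.interior_nonempty_iff_affineSpan_eq_top.2 (top_unique (hclosure ▸ affineSpan_le.2 ?_))
  exact closure_minimal (subset_affineSpan ℝ s) (affineSpan ℝ s).closed_of_finiteDimensional

theorem integrableOn_Ioc_rpow_sub_one_mul_of_norm_le_mul {φ : ℝ → ℝ} {p δ C : ℝ}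
    (hp : -1 < p) (hφ : AEStronglyMeasurable φ (volume.restrict (Ioc 0 δ)))
    (hle : ∀ r ∈ Ioc 0 δ, ‖φ r‖ ≤ C * r) :
    IntegrableOn (fun r => r ^ (p - 1) * φ r) (Ioc 0 δ) := by
  have hbound : IntegrableOn (fun r : ℝ => C * r ^ p) (Ioc 0 δ) :=
    ((intervalIntegral.intervalIntegrable_rpow' hp).const_mul C).1
  refine hbound.mono' (((measurable_id.pow_const _).aestronglyMeasurable).mul hφ) ?_
  filter_upwards [self_mem_ae_restrict measurableSet_Ioc] with r hr
  have hr₀ : 0 ≤ r ^ (p - 1) := rpow_nonneg hr.1.le _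
  calc ‖r ^ (p - 1) * φ r‖ = r ^ (p - 1) * ‖φ r‖ := by
        rw [norm_mul, norm_of_nonneg hr₀]
    _ ≤ r ^ (p - 1) * (C * r) := mul_le_mul_of_nonneg_left (hle r hr) hr₀
    _ = C * r ^ p := by
        rw [mul_left_comm, ← rpow_add_one hr.1.ne', sub_add_cancel]

theorem integrableOn_Ioi_rpow_sub_one_mul_of_norm_le {φ : ℝ → ℝ} {p δ M : ℝ}
    (hp : p < 0) (hδ : 0 < δ) (hφ : AEStronglyMeasurable φ (volume.restrict (Ioi δ)))
    (hle : ∀ r ∈ Ioi δ, ‖φ r‖ ≤ M) :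
    IntegrableOn (fun r => r ^ (p - 1) * φ r) (Ioi δ) := by
  have hbound : IntegrableOn (fun r : ℝ => M * r ^ (p - 1)) (Ioi δ) :=
    (integrableOn_Ioi_rpow_of_lt (by linarith) hδ).const_mul _
  refine hbound.mono' (((measurable_id.pow_const _).aestronglyMeasurable).mul hφ) ?_
  filter_upwards [self_mem_ae_restrict measurableSet_Ioi] with r hr
  have hr₀ : 0 ≤ r ^ (p - 1) := rpow_nonneg (hδ.trans hr).le _
  calc ‖r ^ (p - 1) * φ r‖ = r ^ (p - 1) * ‖φ r‖ := by
        rw [norm_mul, norm_of_nonneg hr₀]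
    _ ≤ r ^ (p - 1) * M := mul_le_mul_of_nonneg_left (hle r hr) hr₀
    _ = M * r ^ (p - 1) := mul_comm _ _

theorem ball_body_neg_integrable_general {n : ℕ}
    (g : EuclideanSpace ℝ (Fin n) → ℝ) (hnonneg : ∀ x, 0 ≤ g x)
    (husc : UpperSemicontinuous g)
    (hlc : ∀ x y : EuclideanSpace ℝ (Fin n), ∀ l : ℝ, 0 < l → l < 1 →
      0 < g x * g y → g x ^ (1 - l) * g y ^ l ≤ g ((1 - l) • x + l • y))
    (hmax : ∀ x, g x ≤ g 0)
    (h0int : (0 : EuclideanSpace ℝ (Fin n)) ∈ interior (closure {x | g x ≠ 0})) :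
    ∀ p : ℝ, -1 < p → p < 0 → ∀ x : EuclideanSpace ℝ (Fin n),
      IntegrableOn (fun r : ℝ => r ^ (p - 1) * (g (r • x) - g 0)) (Ioi 0) := by
  intro p hp₁ hp₀ x
  have hg : IsLogConcave g := hlc
  have h0 : (0 : EuclideanSpace ℝ (Fin n)) ∈ interior (Function.support g) := by
    rwa [← (hg.convex_support hnonneg).interior_closure_eq_interior_of_finiteDimensional]
  have hg0 : 0 < g 0 := (hnonneg 0).lt_of_ne' (interior_subset h0)
  obtain ⟨δ, hδ, hδx⟩ : ∃ δ > 0, δ • x ∈ Function.support g :=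
    ((continuous_id.smul continuous_const : Continuous fun r : ℝ => r • x).tendsto' 0 0
      (zero_smul ℝ x)).eventually_mem (mem_interior_iff_mem_nhds.1 h0) |>.exists_gt
  have hgδ : 0 < g (δ • x) := (hnonneg _).lt_of_ne' hδx
  have hφ : AEStronglyMeasurable (fun r : ℝ => g (r • x) - g 0) :=
    ((husc.measurable.comp (measurable_id.smul_const x)).sub_const _).aestronglyMeasurable
  have hnorm : ∀ r : ℝ, ‖g (r • x) - g 0‖ = g 0 - g (r • x) := fun r => by
    rw [Real.norm_of_nonpos (sub_nonpos.2 (hmax _)), neg_sub]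
  rw [← Ioc_union_Ioi_eq_Ioi hδ.le]
  refine IntegrableOn.union ?_ ?_
  · refine integrableOn_Ioc_rpow_sub_one_mul_of_norm_le_mul hp₁ hφ.restrict
      (C := g 0 * (log (g 0) - log (g (δ • x))) / δ) fun r hr => ?_
    have hsegment := hg.sub_le_mul hg0 hgδ (div_nonneg hr.1.le hδ.le) ((div_le_one hδ).2 hr.2)
    rw [smul_zero, zero_add, smul_smul, div_mul_cancel₀ _ hδ.ne'] at hsegment
    exact (hnorm r).trans_le (hsegment.trans_eq (by ring))
  · exact integrableOn_Ioi_rpow_sub_one_mul_of_norm_le hp₀ hδ hφ.restrict (M := g 0)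
      fun r _ => (hnorm r).trans_le (by linarith [hnonneg (r • x)])

/-- for `g ∈ LC_n^0` and `p ∈ (-1,0)`, the integral
`∫_0^∞ r^{p-1}(g(rx) - g(0)) dr` is finite for every `x`. -/
theorem ball_body_neg_integrable {n : ℕ}
    (g : EuclideanSpace ℝ (Fin n) → ℝ) (hnonneg : ∀ x, 0 ≤ g x)
    (husc : UpperSemicontinuous g) (hint : Integrable g) (hpos : 0 < ∫ x, g x)
    (hlc : ∀ x y : EuclideanSpace ℝ (Fin n), ∀ l : ℝ, 0 < l → l < 1 →
      0 < g x * g y → g x ^ (1 - l) * g y ^ l ≤ g ((1 - l) • x + l • y))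
    (hmax : ∀ x, g x ≤ g 0)
    (h0int : (0 : EuclideanSpace ℝ (Fin n)) ∈ interior (closure {x | g x ≠ 0})) :
    ∀ p : ℝ, -1 < p → p < 0 → ∀ x : EuclideanSpace ℝ (Fin n),
      IntegrableOn (fun r : ℝ => r ^ (p - 1) * (g (r • x) - g 0)) (Ioi 0) :=
  ball_body_neg_integrable_general g hnonneg husc hlc hmax h0int
end

section
/- Let K ⊂ ℝⁿ be a convex body and p > 0. Then for every x ∈ ℝⁿ, ∫_K ‖x‖_{K-y}^{-p} dy = p ∫_0^∞ g_K(rx) r^{p-1} dr, where g_K(x) = Vol_n(K ∩ (K+x)) and ‖x‖_{K-y} = inf{t > 0 : x ∈ t(K-y)}. -/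
/-!
For `y ∈ K` and `x ≠ 0`, the gauge of `K - y` at `x` is the reciprocal of
`ρ(y) = sup {t ≥ 0 | y + t • x ∈ K}`, and since `K - y` is closed, convex and contains `0`,
`t ≤ ρ(y)` holds exactly when `y + t • x ∈ K`. Hence the superlevel set `{ρ ≥ t}` is
`K ∩ (K - t • x)`, whose volume is `g_K(t • x)` by translation invariance, and the identity is the
layer cake formula `∫ ρ ^ p = p ∫₀^∞ t ^ (p - 1) vol {ρ ≥ t} dt`.
-/

open MeasureTheory Set Pointwise

section Gauge

variable {E : Type*} [NormedAddCommGroup E] [NormedSpace ℝ E] {C : Set E} {x : E} {r : ℝ}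

theorem Bornology.IsBounded.gauge_pos (hC : Bornology.IsBounded C) (hx : x ≠ 0) (hr : 0 < r)
    (hxr : x ∈ r • C) : 0 < gauge C x := by
  obtain ⟨R, hR, hCR⟩ := hC.exists_pos_norm_le
  have hle : ‖x‖ / R ≤ gauge C x := by
    rw [gauge_def]
    refine le_csInf ⟨r, hr, hxr⟩ ?_
    rintro s ⟨hs, c, hc, rfl⟩
    rw [div_le_iff₀ hR, norm_smul, Real.norm_of_nonneg hs.le]
    exact mul_le_mul_of_nonneg_left (hCR c hc) hs.le
  exact (div_pos (norm_pos_iff.mpr hx) hR).trans_le hle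

theorem Convex.smul_mem_of_le_inv_gauge (hconv : Convex ℝ C) (hclosed : IsClosed C)
    (h0 : (0 : E) ∈ C) (hr : 0 < r) (hle : r ≤ (gauge C x)⁻¹) : r • x ∈ C := by
  have hpos : 0 < gauge C x := inv_pos.mp (hr.trans_le hle)
  have hne : {t ∈ Ioi (0 : ℝ) | x ∈ t • C}.Nonempty := by
    by_contra h
    rw [not_nonempty_iff_eq_empty] at h
    rw [gauge_def, h, Real.sInf_empty] at hpos
    exact lt_irrefl _ hpos
  have hIoo : Ioo 0 r ⊆ {s : ℝ | s • x ∈ C} := by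
    rintro s ⟨hs, hsr⟩
    have hlt : gauge C x < s⁻¹ := (lt_inv_comm₀ hs hpos).mp (hsr.trans_le hle)
    rw [gauge_def] at hlt
    obtain ⟨t, ⟨ht, c, hc, rfl⟩, hts⟩ := exists_lt_of_csInf_lt hne hlt
    have hst : s * t ≤ 1 := ((mul_lt_mul_of_pos_left hts hs).trans_eq (mul_inv_cancel₀ hs.ne')).le
    change s • t • c ∈ C
    rw [smul_smul]
    exact hconv.smul_mem_of_zero_mem h0 hc ⟨(mul_pos hs ht).le, hst⟩
  have hcl : IsClosed {s : ℝ | s • x ∈ C} := hclosed.preimage (continuous_id.smul continuous_const)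
  exact hcl.closure_subset_iff.mpr hIoo (by rw [closure_Ioo hr.ne]; exact right_mem_Icc.mpr hr.le)

theorem Convex.le_inv_gauge_iff (hconv : Convex ℝ C) (hclosed : IsClosed C)
    (hbdd : Bornology.IsBounded C) (h0 : (0 : E) ∈ C) (hx : x ≠ 0) (hr : 0 < r) :
    r ≤ (gauge C x)⁻¹ ↔ r • x ∈ C := by
  refine ⟨hconv.smul_mem_of_le_inv_gauge hclosed h0 hr, fun hrx => ?_⟩
  have hxr : x ∈ r⁻¹ • C := (mem_inv_smul_set_iff₀ hr.ne' _ _).mpr hrx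
  exact (le_inv_comm₀ hr (hbdd.gauge_pos hx (inv_pos.mpr hr) hxr)).mpr
    (gauge_le_of_mem (inv_nonneg.mpr hr.le) hxr)

end Gauge

section Covariogram

variable {E : Type*} [NormedAddCommGroup E] [NormedSpace ℝ E] {K : Set E} {x : E} {t : ℝ}

/-- `y ↦ ρ_{K-y}(x) = ‖x‖_{K-y}⁻¹` on `K`, extended by zero. -/
noncomputable def radialFn (K : Set E) (x : E) : E → ℝ :=
  K.indicator fun y => (gauge (-y +ᵥ K) x)⁻¹

theorem radialFn_nonneg (K : Set E) (x y : E) : 0 ≤ radialFn K x y :=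
  indicator_nonneg (fun _ _ => inv_nonneg.mpr (gauge_nonneg _)) y

theorem le_radialFn_iff (hK : IsCompact K) (hconv : Convex ℝ K) (hx : x ≠ 0) (ht : 0 < t)
    (y : E) : t ≤ radialFn K x y ↔ y ∈ K ∧ y + t • x ∈ K := by
  by_cases hy : y ∈ K
  · have h0 : (0 : E) ∈ -y +ᵥ K := by
      rwa [mem_vadd_set_iff_neg_vadd_mem, neg_neg, vadd_eq_add, add_zero]
    rw [radialFn, indicator_of_mem hy, (hconv.vadd (-y)).le_inv_gauge_iff
      (hK.vadd (-y)).isClosed (hK.vadd (-y)).isBounded h0 hx ht,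
      mem_vadd_set_iff_neg_vadd_mem, neg_neg, vadd_eq_add, and_iff_right hy]
  · simp [radialFn, hy, ht.not_ge]

theorem setOf_le_radialFn (hK : IsCompact K) (hconv : Convex ℝ K) (hx : x ≠ 0) (ht : 0 < t) :
    {y | t ≤ radialFn K x y} = K ∩ (-(t • x) +ᵥ K) := by
  ext y
  rw [mem_inter_iff, mem_vadd_set_iff_neg_vadd_mem, neg_neg, vadd_eq_add, add_comm,
    ← le_radialFn_iff hK hconv hx ht]
  rfl

variable [MeasurableSpace E]

theorem measure_setOf_le_radialFn (μ : Measure E) [μ.IsAddLeftInvariant] (hK : IsCompact K)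
    (hconv : Convex ℝ K) (hx : x ≠ 0) (ht : 0 < t) :
    μ {y | t ≤ radialFn K x y} = μ (K ∩ (t • x +ᵥ K)) := by
  rw [setOf_le_radialFn hK hconv hx ht, ← measure_vadd μ (t • x), vadd_set_inter, vadd_neg_vadd,
    inter_comm]

variable [BorelSpace E]

theorem measurable_radialFn (hK : IsCompact K) (hconv : Convex ℝ K) (hx : x ≠ 0) :
    Measurable (radialFn K x) := by
  refine measurable_of_Ici fun t => ?_
  change MeasurableSet {y | t ≤ radialFn K x y}
  rcases le_or_gt t 0 with ht | ht
  · have huniv : {y | t ≤ radialFn K x y} = univ :=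
      eq_univ_of_forall fun y => ht.trans (radialFn_nonneg K x y)
    exact huniv ▸ .univ
  · exact setOf_le_radialFn hK hconv hx ht ▸ hK.measurableSet.inter (hK.vadd _).measurableSet

theorem setIntegral_gauge_vadd_rpow_neg (μ : Measure E) [μ.IsAddLeftInvariant]
    [IsFiniteMeasureOnCompacts μ] (hK : IsCompact K) (hconv : Convex ℝ K) (hx : x ≠ 0)
    {p : ℝ} (hp : 0 < p) :
    ∫ y in K, gauge (-y +ᵥ K) x ^ (-p) ∂μ
      = p * ∫ t in Ioi 0, (μ (K ∩ (t • x +ᵥ K))).toReal * t ^ (p - 1) := by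
  set f := radialFn K x
  have hf : Measurable f := measurable_radialFn hK hconv hx
  have hf_nonneg : ∀ y, 0 ≤ f y := radialFn_nonneg K x
  have hLHS : ∫ y in K, gauge (-y +ᵥ K) x ^ (-p) ∂μ = ∫ y, f y ^ p ∂μ := by
    rw [← integral_indicator hK.measurableSet]
    congr 1 with y
    by_cases hy : y ∈ K
    · simp [f, radialFn, hy, Real.rpow_neg (gauge_nonneg _), Real.inv_rpow (gauge_nonneg _)]
    · simp [f, radialFn, hy, Real.zero_rpow hp.ne']
  have htail_meas : Measurable fun t => μ {y | t ≤ f y} * ENNReal.ofReal (t ^ (p - 1)) := by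
    have htail_anti : Antitone fun t : ℝ => μ {y | t ≤ f y} :=
      fun a b hab => measure_mono fun y hy => hab.trans hy
    exact htail_anti.measurable.mul (measurable_id.pow_const _).ennreal_ofReal
  have htail_fin : ∀ t ∈ Ioi (0 : ℝ), μ {y | t ≤ f y} * ENNReal.ofReal (t ^ (p - 1)) < ⊤ := by
    intro t ht
    refine ENNReal.mul_lt_top ?_ ENNReal.ofReal_lt_top
    rw [setOf_le_radialFn hK hconv hx ht]
    exact (measure_mono inter_subset_left).trans_lt hK.measure_lt_top
  calc ∫ y in K, gauge (-y +ᵥ K) x ^ (-p) ∂μ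
      = (∫⁻ y, ENNReal.ofReal (f y ^ p) ∂μ).toReal := by
        rw [hLHS, integral_eq_lintegral_of_nonneg_ae
          (ae_of_all _ fun y => Real.rpow_nonneg (hf_nonneg y) p)
          (hf.pow_const p).aestronglyMeasurable]
    _ = p * ∫ t in Ioi 0, (μ {y | t ≤ f y} * ENNReal.ofReal (t ^ (p - 1))).toReal := by
        rw [lintegral_rpow_eq_lintegral_meas_le_mul μ (ae_of_all _ hf_nonneg) hf.aemeasurable hp,
          ENNReal.toReal_mul, ENNReal.toReal_ofReal hp.le, integral_toReal htail_meas.aemeasurable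
          (ae_restrict_of_forall_mem measurableSet_Ioi htail_fin)]
    _ = p * ∫ t in Ioi 0, (μ (K ∩ (t • x +ᵥ K))).toReal * t ^ (p - 1) := by
        congr 1
        refine setIntegral_congr_fun measurableSet_Ioi fun t ht => ?_
        rw [ENNReal.toReal_mul, ENNReal.toReal_ofReal (Real.rpow_nonneg (le_of_lt ht) _),
          measure_setOf_le_radialFn μ hK hconv hx ht]

end Covariogram

theorem radial_mean_rep_pos_general {n : ℕ} (K : Set (EuclideanSpace ℝ (Fin n)))
    (hK : IsCompact K) (hKconv : Convex ℝ K)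
    (gK : EuclideanSpace ℝ (Fin n) → ℝ)
    (hgK : ∀ x, gK x = (volume (K ∩ (x +ᵥ K))).toReal)
    (p : ℝ) (hp : 0 < p) (x : EuclideanSpace ℝ (Fin n)) :
    ∫ y in K, (gauge ((-y) +ᵥ K) x) ^ (-p)
      = p * ∫ r in Ioi (0:ℝ), gK (r • x) * r ^ (p - 1) := by
  rcases eq_or_ne x 0 with rfl | hx
  · -- Both sides are junk zeros: `0 ^ (-p) = 0`, and `r ^ (p - 1)` is not integrable on `(0, ∞)`.
    simp only [gauge_zero, Real.zero_rpow (neg_ne_zero.mpr hp.ne'), integral_zero, smul_zero,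
      integral_const_mul, setIntegral_Ioi_zero_rpow, mul_zero]
  · simp_rw [hgK]
    exact setIntegral_gauge_vadd_rpow_neg volume hK hKconv hx hp

/-- for a convex body `K` and `p > 0`,
`∫_K ‖x‖_{K-y}^{-p} dy = p ∫_0^∞ g_K(rx) r^{p-1} dr`. -/
theorem radial_mean_rep_pos {n : ℕ} (K : Set (EuclideanSpace ℝ (Fin n)))
    (hK : IsCompact K) (hKconv : Convex ℝ K) (hKint : (interior K).Nonempty)
    (gK : EuclideanSpace ℝ (Fin n) → ℝ)
    (hgK : ∀ x, gK x = (volume (K ∩ (x +ᵥ K))).toReal)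
    (p : ℝ) (hp : 0 < p) (x : EuclideanSpace ℝ (Fin n)) :
    ∫ y in K, (gauge ((-y) +ᵥ K) x) ^ (-p)
      = p * ∫ r in Ioi (0:ℝ), gK (r • x) * r ^ (p - 1) :=
  radial_mean_rep_pos_general K hK hKconv gK hgK p hp x
end

section
/- Let K ⊂ ℝⁿ be a convex body and p ∈ (-1, 0). Then for every x ∈ ℝⁿ, ∫_K ‖x‖_{K-y}^{-p} dy = p ∫_0^∞ (g_K(rx) - Vol_n(K)) r^{p-1} dr. -/
/-!
For `y` in the interior of `K` and `t > 0`, `‖x‖_{K-y} ≤ t` holds exactly when `y + t⁻¹ • x ∈ K`.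
Hence the super-level set `{y ∈ K : ‖x‖_{K-y} > t}` has volume `Vol(K) - g_K(t⁻¹ • x)`, using that
the covariogram is even and that the boundary of a convex set is null. The layer-cake formula for
`∫_K ‖x‖_{K-y}^{-p} dy`, followed by the substitution `r = t⁻¹`, gives the identity.
-/

open MeasureTheory Set Pointwise Topology ENNReal

section Gauge

variable {E : Type*} [NormedAddCommGroup E] [NormedSpace ℝ E]

theorem gauge_le_iff_mem_smul {s : Set E} (hs : Convex ℝ s) (hs_closed : IsClosed s)
    (hs₀ : s ∈ 𝓝 0) {t : ℝ} (ht : 0 < t) (x : E) : gauge s x ≤ t ↔ x ∈ t • s := by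
  have h := gauge_le_one_iff_mem_closure hs hs₀ (x := t⁻¹ • x)
  rw [hs_closed.closure_eq] at h
  rw [mem_smul_set_iff_inv_smul_mem₀ ht.ne', ← h, gauge_smul_of_nonneg (inv_nonneg.2 ht.le),
    smul_eq_mul, inv_mul_le_one₀ ht]

theorem gauge_neg_vadd_le_iff {K : Set E} (hK : Convex ℝ K) (hK_closed : IsClosed K) {y : E}
    (hy : y ∈ interior K) {t : ℝ} (ht : 0 < t) (x : E) :
    gauge ((-y) +ᵥ K) x ≤ t ↔ y + t⁻¹ • x ∈ K := by
  have h₀ : (-y) +ᵥ K ∈ 𝓝 (0 : E) := by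
    simpa using vadd_mem_nhds_vadd (-y) (mem_interior_iff_mem_nhds.1 hy)
  rw [gauge_le_iff_mem_smul (hK.vadd _) (hK_closed.vadd _) h₀ ht,
    mem_smul_set_iff_inv_smul_mem₀ ht.ne', mem_vadd_set_iff_neg_vadd_mem, vadd_eq_add, neg_neg]

theorem measurable_indicator_interior_gauge_neg_vadd [MeasurableSpace E] [OpensMeasurableSpace E]
    {K : Set E} (hK : Convex ℝ K) (hK_closed : IsClosed K) (x : E) :
    Measurable ((interior K).indicator fun y ↦ gauge ((-y) +ᵥ K) x) := by
  refine measurable_of_Iic fun c ↦ ?_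
  rcases lt_or_ge c 0 with hc | hc
  · convert MeasurableSet.empty
    refine eq_empty_of_forall_notMem fun y hy ↦ ?_
    exact (hc.trans_le (indicator_nonneg (fun _ _ ↦ gauge_nonneg _) y)).not_ge hy
  have h : (interior K).indicator (fun y ↦ gauge ((-y) +ᵥ K) x) ⁻¹' Iic c
      = (interior K)ᶜ ∪ ⋂ t ∈ Ioi c, (· + t⁻¹ • x) ⁻¹' K := by
    ext y
    by_cases hy : y ∈ interior K
    · simp only [mem_preimage, indicator_of_mem hy, mem_Iic, mem_union, mem_compl_iff, hy,
        not_true_eq_false, false_or, mem_iInter, mem_Ioi]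
      rw [← forall_gt_imp_ge_iff_le_of_dense]
      exact forall₂_congr fun t ht ↦ gauge_neg_vadd_le_iff hK hK_closed hy (hc.trans_lt ht) x
    · simp [hy, hc]
  rw [h]
  exact measurableSet_interior.compl.union (isClosed_biInter fun t _ ↦
    hK_closed.preimage (continuous_add_const _)).measurableSet

theorem aemeasurable_gauge_neg_vadd_restrict_interior [MeasurableSpace E]
    [OpensMeasurableSpace E] {μ : Measure E} {K : Set E} (hK : Convex ℝ K)
    (hK_closed : IsClosed K) (x : E) :
    AEMeasurable (fun y : E ↦ gauge ((-y) +ᵥ K) x) (μ.restrict (interior K)) :=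
  (aemeasurable_indicator_iff measurableSet_interior).1
    (measurable_indicator_interior_gauge_neg_vadd hK hK_closed x).aemeasurable

end Gauge

theorem measure_inter_preimage_add_const {G : Type*} [AddCommGroup G] [MeasurableSpace G]
    [MeasurableAdd G] (μ : Measure G) [μ.IsAddLeftInvariant] (K : Set G) (v : G) :
    μ (K ∩ (· + v) ⁻¹' K) = μ (K ∩ (v +ᵥ K)) := by
  have h : v +ᵥ (K ∩ (· + v) ⁻¹' K) = (v +ᵥ K) ∩ K := by
    ext z
    simp only [mem_vadd_set_iff_neg_vadd_mem, mem_inter_iff, mem_preimage, vadd_eq_add,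
      neg_add_cancel_comm, and_comm]
  rw [← measure_vadd μ v, h, inter_comm]

theorem lintegral_Ioi_comp_inv_mul_rpow (g : ℝ → ℝ≥0∞) (q : ℝ) :
    ∫⁻ t in Ioi 0, g t⁻¹ * ENNReal.ofReal (t ^ (q - 1))
      = ∫⁻ r in Ioi 0, g r * ENNReal.ofReal (r ^ (-q - 1)) := by
  have h_image : (fun t : ℝ ↦ t⁻¹) '' Ioi 0 = Ioi 0 := by
    rw [image_inv_eq_inv]
    ext r
    simp
  conv_rhs => rw [← h_image, lintegral_image_eq_lintegral_abs_deriv_mul measurableSet_Ioi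
    (fun t ht ↦ (hasDerivAt_inv (ne_of_gt ht)).hasDerivWithinAt) inv_injective.injOn]
  refine setLIntegral_congr_fun measurableSet_Ioi fun t (ht : 0 < t) ↦ ?_
  have h_jac : |-(t ^ 2)⁻¹| * t⁻¹ ^ (-q - 1) = t ^ (q - 1) := by
    rw [abs_neg, abs_of_pos (by positivity), Real.inv_rpow ht.le, ← Real.rpow_neg ht.le,
      ← Real.rpow_natCast, ← Real.rpow_neg ht.le, ← Real.rpow_add ht]
    congr 1
    push_cast
    ring
  rw [mul_left_comm, ← ENNReal.ofReal_mul (by positivity), h_jac]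

theorem integral_Ioi_toReal_sub_mul_rpow {C : ℝ → ℝ≥0∞} (hC : Measurable C) {V : ℝ≥0∞}
    (hCV : ∀ r, C r ≤ V) (hV : V ≠ ∞) (a : ℝ) :
    ∫ r in Ioi 0, ((C r).toReal - V.toReal) * r ^ a
      = -(∫⁻ r in Ioi 0, (V - C r) * ENNReal.ofReal (r ^ a)).toReal := by
  have h_pointwise : ∀ r ∈ Ioi (0 : ℝ),
      ((C r).toReal - V.toReal) * r ^ a = -((V - C r) * ENNReal.ofReal (r ^ a)).toReal := by
    intro r (hr : 0 < r)
    rw [ENNReal.toReal_mul, ENNReal.toReal_sub_of_le (hCV r) hV,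
      ENNReal.toReal_ofReal (Real.rpow_nonneg hr.le a)]
    ring
  rw [setIntegral_congr_fun measurableSet_Ioi h_pointwise, integral_neg, integral_toReal]
  · exact ((measurable_const.sub hC).mul (by fun_prop)).aemeasurable
  · exact ae_of_all _ fun r ↦
      ENNReal.mul_lt_top ((tsub_le_self).trans_lt hV.lt_top) ENNReal.ofReal_lt_top

section Covariogram

variable {E : Type*} [NormedAddCommGroup E] [NormedSpace ℝ E] [MeasurableSpace E] [BorelSpace E]
  [FiniteDimensional ℝ E]

theorem measurable_measure_inter_smul_vadd (μ : Measure E) [SFinite μ] {K : Set E}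
    (hK : MeasurableSet K) (x : E) :
    Measurable fun r : ℝ ↦ μ (K ∩ ((r • x) +ᵥ K)) := by
  have hW : MeasurableSet {rz : ℝ × E | rz.2 ∈ K ∧ rz.2 - rz.1 • x ∈ K} :=
    (measurable_snd hK).inter ((measurable_snd.sub (measurable_fst.smul_const x)) hK)
  convert measurable_measure_prodMk_left (ν := μ) hW using 3 with r
  ext z
  simp [mem_vadd_set_iff_neg_vadd_mem, neg_add_eq_sub]

variable {μ : Measure E} [μ.IsAddHaarMeasure]

theorem measure_interior_inter_lt_gauge {K : Set E} (hK : Convex ℝ K) (hK_closed : IsClosed K)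
    (hK_fin : μ K ≠ ∞) (x : E) {t : ℝ} (ht : 0 < t) :
    μ (interior K ∩ {y | t < gauge ((-y) +ᵥ K) x}) = μ K - μ (K ∩ ((t⁻¹ • x) +ᵥ K)) := by
  set S := (· + t⁻¹ • x) ⁻¹' K
  have hS : interior K ∩ {y | t < gauge ((-y) +ᵥ K) x} = interior K \ S := by
    ext y
    simp only [mem_inter_iff, mem_ofPred_eq, mem_sdiff, ← not_le]
    exact and_congr_right fun hy ↦ not_congr (gauge_neg_vadd_le_iff hK hK_closed hy ht x)
  have h_int : interior K =ᵐ[μ] K := interior_ae_eq_of_null_frontier (hK.addHaar_frontier μ)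
  have h_split : μ (interior K ∩ S) + μ (interior K \ S) = μ (interior K) :=
    measure_inter_add_sdiff _ (hK_closed.preimage (continuous_add_const _)).measurableSet
  rw [measure_congr (h_int.inter (ae_eq_refl S)), measure_inter_preimage_add_const,
    measure_congr h_int] at h_split
  rw [hS]
  exact ENNReal.eq_sub_of_add_eq (measure_ne_top_of_subset inter_subset_left hK_fin)
    ((add_comm _ _).trans h_split)

theorem lintegral_interior_gauge_neg_vadd_rpow {K : Set E} (hK : Convex ℝ K)
    (hK_closed : IsClosed K) (hK_fin : μ K ≠ ∞) (x : E) {q : ℝ} (hq : 0 < q) :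
    ∫⁻ y in interior K, ENNReal.ofReal (gauge ((-y) +ᵥ K) x ^ q) ∂μ
      = ENNReal.ofReal q *
          ∫⁻ r in Ioi 0, (μ K - μ (K ∩ ((r • x) +ᵥ K))) * ENNReal.ofReal (r ^ (-q - 1)) := by
  rw [lintegral_rpow_eq_lintegral_meas_lt_mul _ (ae_of_all _ fun y ↦ gauge_nonneg _)
    (aemeasurable_gauge_neg_vadd_restrict_interior hK hK_closed x) hq,
    ← lintegral_Ioi_comp_inv_mul_rpow]
  congr 1
  refine setLIntegral_congr_fun measurableSet_Ioi fun t (ht : 0 < t) ↦ ?_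
  rw [Measure.restrict_apply' measurableSet_interior, inter_comm,
    measure_interior_inter_lt_gauge hK hK_closed hK_fin x ht]

end Covariogram

theorem radial_mean_rep_neg_general {n : ℕ} (K : Set (EuclideanSpace ℝ (Fin n)))
    (hK : IsCompact K) (hKconv : Convex ℝ K)
    (gK : EuclideanSpace ℝ (Fin n) → ℝ)
    (hgK : ∀ x, gK x = (volume (K ∩ (x +ᵥ K))).toReal)
    (p : ℝ) (hp0 : p < 0) (x : EuclideanSpace ℝ (Fin n)) :
    ∫ y in K, (gauge ((-y) +ᵥ K) x) ^ (-p)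
      = p * ∫ r in Ioi (0:ℝ), (gK (r • x) - (volume K).toReal) * r ^ (p - 1) := by
  have hK_fin : volume K ≠ ∞ := hK.measure_lt_top.ne
  have h_meas := (aemeasurable_gauge_neg_vadd_restrict_interior (μ := volume) hKconv
    hK.isClosed x).pow_const (-p)
  rw [← setIntegral_congr_set (interior_ae_eq_of_null_frontier (hKconv.addHaar_frontier volume)),
    integral_eq_lintegral_of_nonneg_ae (ae_of_all _ fun y ↦ Real.rpow_nonneg (gauge_nonneg _) _)
      h_meas.aestronglyMeasurable,
    lintegral_interior_gauge_neg_vadd_rpow hKconv hK.isClosed hK_fin x (neg_pos.2 hp0)]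
  simp_rw [hgK]
  rw [integral_Ioi_toReal_sub_mul_rpow (measurable_measure_inter_smul_vadd volume
    hK.isClosed.measurableSet x) (fun r ↦ measure_mono inter_subset_left) hK_fin, neg_neg,
    ENNReal.toReal_mul, ENNReal.toReal_ofReal (neg_pos.2 hp0).le]
  ring

/-- for a convex body `K` and `p ∈ (-1,0)`,
`∫_K ‖x‖_{K-y}^{-p} dy = p ∫_0^∞ (g_K(rx) - Vol(K)) r^{p-1} dr`. -/
theorem radial_mean_rep_neg {n : ℕ} (K : Set (EuclideanSpace ℝ (Fin n)))
    (hK : IsCompact K) (hKconv : Convex ℝ K) (hKint : (interior K).Nonempty)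
    (gK : EuclideanSpace ℝ (Fin n) → ℝ)
    (hgK : ∀ x, gK x = (volume (K ∩ (x +ᵥ K))).toReal)
    (p : ℝ) (hp : -1 < p) (hp0 : p < 0) (x : EuclideanSpace ℝ (Fin n)) :
    ∫ y in K, (gauge ((-y) +ᵥ K) x) ^ (-p)
      = p * ∫ r in Ioi (0:ℝ), (gK (r • x) - (volume K).toReal) * r ^ (p - 1) :=
  radial_mean_rep_neg_general K hK hKconv gK hgK p hp0 x
end
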